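/- arXiv:1311.7586 — 2 statements merged into one kernel-verified Lean document; each statement's English description precedes it below -/
import Mathlib

section
/- Let (Z,d) be a proper geodesic CAT(0) space and let F be a set of geodesic lines of Z (up to reparametrization) that is closed for the geodesic topology. Then the support of F, i.e. the union of the images of the elements of F, is a closed subset of Z. -/
open Metric

/-- `f : ℝ → Z` is a (parametrized) geodesic line: an isometric embedding of `ℝ`. -/
def IsGeodesicLine {Z : Type*} [MetricSpace Z] (f : ℝ → Z) : Prop :=
  ∀ s t : ℝ, dist (f s) (f t) = |s - t|

/-- `Z` is a geodesic metric space: any two points are joined by a geodesic segment. -/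
def IsGeodesicSpace (Z : Type*) [MetricSpace Z] : Prop :=
  ∀ x y : Z, ∃ γ : ℝ → Z, γ 0 = x ∧ γ (dist x y) = y ∧
    ∀ s ∈ Set.Icc 0 (dist x y), ∀ t ∈ Set.Icc 0 (dist x y), dist (γ s) (γ t) = |s - t|

/-- `Z` is CAT(0): the CN-inequality of Bruhat–Tits holds for midpoints. -/
def IsCAT0 (Z : Type*) [MetricSpace Z] : Prop :=
  ∀ x y z m : Z, dist y m = dist y z / 2 → dist z m = dist y z / 2 →
    dist x m ^ 2 ≤ (dist x y ^ 2 + dist x z ^ 2) / 2 - dist y z ^ 2 / 4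

/-- Reparametrization (change of origin) of a continuous map `ℝ → Z` by translation. -/
noncomputable def translateMap {Z : Type*} [MetricSpace Z] (f : C(ℝ, Z)) (a : ℝ) :
    C(ℝ, Z) :=
  f.comp (Homeomorph.addRight a : C(ℝ, ℝ))

/-!
Since `F` is invariant under change of origin, its support is the image of `F` under evaluation
at `0`. For a compact `K ⊆ Z`, the geodesic lines with origin in `K` form an equicontinuous and
pointwise relatively compact family, hence a compact set of `C(ℝ, Z)` by Arzelà–Ascoli. So the
part of the support lying in `K` is the image of a compact set under the continuous evaluation
map, hence closed; and a subset of a metric space meeting every compact set in a closed set is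
closed.
-/

section GeodesicLine

variable {Z : Type*} [MetricSpace Z]

theorem isGeodesicLine_iff_isometry {f : ℝ → Z} : IsGeodesicLine f ↔ Isometry f := by
  simp only [IsGeodesicLine, isometry_iff_dist_eq, Real.dist_eq]

theorem IsGeodesicLine.comp_add_right {f : ℝ → Z} (hf : IsGeodesicLine f) (a : ℝ) :
    IsGeodesicLine fun t => f (t + a) := fun s t => by
  rw [hf, add_sub_add_right_eq_sub]

theorem isClosed_setOf_isGeodesicLine : IsClosed {f : ℝ → Z | IsGeodesicLine f} := by
  simp only [IsGeodesicLine, Set.ofPred_forall]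
  exact isClosed_iInter fun s => isClosed_iInter fun t =>
    isClosed_eq ((continuous_apply s).dist (continuous_apply t)) continuous_const

theorem isCompact_setOf_isGeodesicLine_apply_zero_mem [ProperSpace Z] {K : Set Z}
    (hK : IsCompact K) : IsCompact {g : C(ℝ, Z) | IsGeodesicLine g ∧ g 0 ∈ K} := by
  set S := {g : C(ℝ, Z) | IsGeodesicLine g ∧ g 0 ∈ K}
  have hS_image : ContinuousMap.toFun '' S = {f : ℝ → Z | IsGeodesicLine f ∧ f 0 ∈ K} := by
    refine Set.Subset.antisymm (Set.image_subset_iff.mpr fun g hg => hg) ?_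
    rintro f ⟨hf, hf0⟩
    exact ⟨⟨f, (isGeodesicLine_iff_isometry.mp hf).continuous⟩, ⟨hf, hf0⟩, rfl⟩
  have hS_pointwise : {f : ℝ → Z | IsGeodesicLine f ∧ f 0 ∈ K} ⊆
      Set.univ.pi fun t => cthickening |t| K := by
    rintro f ⟨hf, hf0⟩ t -
    exact mem_cthickening_of_dist_le _ _ _ _ hf0 (by rw [hf, sub_zero])
  refine ArzelaAscoli.isCompact_of_equicontinuous S ?_ ?_
  · rw [hS_image]
    exact (isCompact_univ_pi fun t => hK.cthickening).of_isClosed_subset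
      (isClosed_setOf_isGeodesicLine.inter (hK.isClosed.preimage (continuous_apply 0)))
      hS_pointwise
  · exact (LipschitzWith.uniformEquicontinuous _ 1 fun g =>
      (isGeodesicLine_iff_isometry.mp g.2.1).lipschitz).equicontinuous

theorem iUnion_range_eq_image_eval_zero {F : Set C(ℝ, Z)}
    (htrans : ∀ f ∈ F, ∀ a : ℝ, translateMap f a ∈ F) :
    ⋃ f ∈ F, Set.range (f : ℝ → Z) = (fun g : C(ℝ, Z) => g 0) '' F := by
  refine Set.Subset.antisymm ?_ fun _ ⟨g, hg, hx⟩ => Set.mem_biUnion hg ⟨0, hx⟩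
  simp only [Set.iUnion_subset_iff]
  rintro f hf _ ⟨t, rfl⟩
  exact ⟨translateMap f t, htrans f hf t, by simp [translateMap]⟩

end GeodesicLine

theorem support_closed_of_closed_geodesic_family_general
    {Z : Type*} [MetricSpace Z] [ProperSpace Z]
    (F : Set C(ℝ, Z))
    (hF : ∀ f ∈ F, IsGeodesicLine f)
    (htrans : ∀ f ∈ F, ∀ a : ℝ, translateMap f a ∈ F)
    (hclosed : IsClosed F) :
    IsClosed (⋃ f ∈ F, Set.range (f : ℝ → Z)) := by
  rw [iUnion_range_eq_image_eval_zero htrans]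
  refine CompactlyGeneratedSpace.isClosed fun K hK => ?_
  rw [← Set.image_inter_preimage]
  have hF_K : F ∩ (fun g : C(ℝ, Z) => g 0) ⁻¹' K =
      F ∩ {g : C(ℝ, Z) | IsGeodesicLine g ∧ g 0 ∈ K} :=
    Set.ext fun g => ⟨fun ⟨hg, hg0⟩ => ⟨hg, hF g hg, hg0⟩, fun ⟨hg, _, hg0⟩ => ⟨hg, hg0⟩⟩
  rw [hF_K]
  exact (((isCompact_setOf_isGeodesicLine_apply_zero_mem hK).inter_left hclosed).image
    (continuous_eval_const 0)).isClosed

/-- let `Z` be a proper geodesic CAT(0) space and `F` a set of geodesic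
lines, invariant under change of origin (so that it represents a set of unparametrized
geodesics) and closed for the geodesic topology (equivalently, closed in the
compact-open topology as a translation-saturated set). Then the support of `F`,
the union of the images of its elements, is closed in `Z`. -/
theorem support_closed_of_closed_geodesic_family
    {Z : Type*} [MetricSpace Z] [ProperSpace Z]
    (hgeo : IsGeodesicSpace Z) (hcat : IsCAT0 Z)
    (F : Set C(ℝ, Z))
    (hF : ∀ f ∈ F, IsGeodesicLine f)
    (htrans : ∀ f ∈ F, ∀ a : ℝ, translateMap f a ∈ F)
    (hclosed : IsClosed F) :
    IsClosed (⋃ f ∈ F, Set.range (f : ℝ → Z)) :=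
  support_closed_of_closed_geodesic_family_general F hF htrans hclosed
end

section
/- With the notation of the previous statement, the map f sending a cyclic orientation of the simplicial tree T (all valences finite and ≥ 3) to the induced total cyclic order on ∂∞T is injective: two distinct cyclic orientations of T induce distinct total cyclic orders on ∂∞T. -/
/-- `r` represents a germ of geodesic ray issued from `x`. -/
def IsRayFrom {X : Type*} [MetricSpace X] (x : X) (r : ℝ → X) : Prop :=
  r 0 = x ∧ ∃ ε > (0 : ℝ), ∀ s ∈ Set.Icc 0 ε, ∀ t ∈ Set.Icc 0 ε,
    dist (r s) (r t) = |s - t|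

/-- Two ray representatives issued from `x` define the same germ if they coincide on
some initial interval. -/
def GermEq {X : Type*} [MetricSpace X] (x : X) (r r' : ℝ → X) : Prop :=
  ∃ ε > (0 : ℝ), ∀ s ∈ Set.Icc 0 ε, r s = r' s

/-- `r : ℝ → X` is a complete geodesic ray (isometric on `[0, +∞)`). -/
def IsGeodesicRay {X : Type*} [MetricSpace X] (r : ℝ → X) : Prop :=
  ∀ s ≥ (0 : ℝ), ∀ t ≥ (0 : ℝ), dist (r s) (r t) = |s - t|

/-- Two geodesic rays are asymptotic (they define the same point at infinity). -/
def Asymptotic {X : Type*} [MetricSpace X] (r r' : ℝ → X) : Prop :=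
  ∃ C : ℝ, ∀ t ≥ (0 : ℝ), dist (r t) (r' t) ≤ C

/-- A simplicial tree (as a metric space): a geodesic `ℝ`-tree with a discrete set of
vertices, every vertex of finite valence `≥ 3`, every non-vertex point of valence `2`,
and in which every germ of ray extends to a geodesic ray. -/
structure SimplicialTreeSpace where
  space : Type
  [ms : MetricSpace space]
  /-- `space` is geodesic. -/
  geodesic : ∀ x y : space, ∃ γ : ℝ → space, γ 0 = x ∧ γ (dist x y) = y ∧
    ∀ s ∈ Set.Icc 0 (dist x y), ∀ t ∈ Set.Icc 0 (dist x y), dist (γ s) (γ t) = |s - t|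
  /-- `space` is `0`-hyperbolic (four-point condition), hence an `ℝ`-tree. -/
  zero_hyperbolic : ∀ x y z w : space,
    dist x z + dist y w ≤ max (dist x y + dist z w) (dist x w + dist y z)
  vertices : Set space
  /-- Edge lengths are bounded below: vertices are uniformly separated. -/
  edge_lengths_bounded_below : ∃ lambda > (0 : ℝ), ∀ x ∈ vertices, ∀ y ∈ vertices,
    x ≠ y → lambda ≤ dist x y
  /-- Non-vertex points have exactly two germs of rays. -/
  two_germs_off_vertices : ∀ x ∉ vertices, ∃ r r' : ℝ → space,
    IsRayFrom x r ∧ IsRayFrom x r' ∧ ¬ GermEq x r r' ∧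
    ∀ r'' : ℝ → space, IsRayFrom x r'' → GermEq x r'' r ∨ GermEq x r'' r'
  /-- Every vertex has finite valence. -/
  germs_finite : ∀ x : space, ∃ Fx : Set (ℝ → space), Fx.Finite ∧
    ∀ r : ℝ → space, IsRayFrom x r → ∃ r' ∈ Fx, GermEq x r r'
  /-- Every vertex has valence at least `3`. -/
  valence_ge_three : ∀ x ∈ vertices, ∃ r₁ r₂ r₃ : ℝ → space,
    IsRayFrom x r₁ ∧ IsRayFrom x r₂ ∧ IsRayFrom x r₃ ∧
    ¬ GermEq x r₁ r₂ ∧ ¬ GermEq x r₂ r₃ ∧ ¬ GermEq x r₁ r₃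
  /-- Every germ of ray extends to a complete geodesic ray. -/
  germ_extends : ∀ (x : space) (r : ℝ → space), IsRayFrom x r →
    ∃ ρ : ℝ → space, IsGeodesicRay ρ ∧ ρ 0 = x ∧ GermEq x ρ r

attribute [instance] SimplicialTreeSpace.ms

/-- The boundary at infinity of the tree: geodesic rays modulo the asymptotic
relation. -/
def SimplicialTreeSpace.Boundary (T : SimplicialTreeSpace) : Type :=
  Quot (fun r r' : {r : ℝ → T.space // IsGeodesicRay r} => Asymptotic r.1 r'.1)

/-- The point at infinity of a geodesic ray. -/
def SimplicialTreeSpace.atInfinity (T : SimplicialTreeSpace)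
    (r : {r : ℝ → T.space // IsGeodesicRay r}) : T.Boundary :=
  Quot.mk _ r

/-- A cyclic orientation of the tree: a total cyclic order, invariant under germ
equivalence, on the germs of rays at each point. -/
structure IsCyclicOrientation (T : SimplicialTreeSpace)
    (ord : T.space → (ℝ → T.space) → (ℝ → T.space) → (ℝ → T.space) → ℤ) : Prop where
  range : ∀ x r₁ r₂ r₃, ord x r₁ r₂ r₃ = -1 ∨ ord x r₁ r₂ r₃ = 0 ∨ ord x r₁ r₂ r₃ = 1
  germ_invariant : ∀ x r₁ r₂ r₃ r₁' r₂' r₃', GermEq x r₁ r₁' → GermEq x r₂ r₂' →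
    GermEq x r₃ r₃' → ord x r₁ r₂ r₃ = ord x r₁' r₂' r₃'
  zero_iff : ∀ x r₁ r₂ r₃, IsRayFrom x r₁ → IsRayFrom x r₂ → IsRayFrom x r₃ →
    (ord x r₁ r₂ r₃ = 0 ↔ GermEq x r₁ r₂ ∨ GermEq x r₂ r₃ ∨ GermEq x r₁ r₃)
  cyclic : ∀ x r₁ r₂ r₃, ord x r₁ r₂ r₃ = ord x r₂ r₃ r₁ ∧
    ord x r₁ r₂ r₃ = - ord x r₁ r₃ r₂
  trans : ∀ x r₁ r₂ r₃ r₄, IsRayFrom x r₁ → IsRayFrom x r₂ → IsRayFrom x r₃ →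
    IsRayFrom x r₄ → ¬ GermEq x r₁ r₂ → ¬ GermEq x r₁ r₃ → ¬ GermEq x r₁ r₄ →
    ¬ GermEq x r₂ r₃ → ¬ GermEq x r₂ r₄ → ¬ GermEq x r₃ r₄ →
    ord x r₁ r₂ r₃ = 1 → ord x r₁ r₃ r₄ = 1 → ord x r₁ r₂ r₄ = 1

/-- `o` is the cyclic order on the boundary at infinity induced by the cyclic
orientation `ord` of the tree: `o(a,b,c) = 0` if `a, b, c` are not pairwise distinct,
and otherwise `o(a,b,c) = ord_t(r_a, r_b, r_c)` where `t` is the center of the tripod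
determined by `a, b, c` — characterized as the unique point from which rays `r_a, r_b,
r_c` towards `a, b, c` have pairwise distinct germs. -/
structure IsInducedBoundaryOrder (T : SimplicialTreeSpace)
    (ord : T.space → (ℝ → T.space) → (ℝ → T.space) → (ℝ → T.space) → ℤ)
    (o : T.Boundary → T.Boundary → T.Boundary → ℤ) : Prop where
  eq_ord : ∀ (t : T.space) (ra rb rc : {r : ℝ → T.space // IsGeodesicRay r}),
    ra.1 0 = t → rb.1 0 = t → rc.1 0 = t →
    ¬ GermEq t ra.1 rb.1 → ¬ GermEq t rb.1 rc.1 → ¬ GermEq t ra.1 rc.1 →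
    o (T.atInfinity ra) (T.atInfinity rb) (T.atInfinity rc) = ord t ra.1 rb.1 rc.1
  zero_of_not_distinct : ∀ a b c : T.Boundary, (a = b ∨ b = c ∨ a = c) → o a b c = 0

/-- A total cyclic order (with values in `{-1,0,1} ⊆ ℤ`). -/
def IsTotalCyclicOrder {X : Type*} (o : X → X → X → ℤ) : Prop :=
  (∀ x y z : X, o x y z = -1 ∨ o x y z = 0 ∨ o x y z = 1) ∧
  (∀ x y z : X, o x y z = 0 ↔ ¬(x ≠ y ∧ y ≠ z ∧ x ≠ z)) ∧
  (∀ x y z : X, o x y z = o y z x ∧ o x y z = - o x z y) ∧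
  (∀ x y z t : X, x ≠ y → x ≠ z → x ≠ t → y ≠ z → y ≠ t → z ≠ t →
    o x y z = 1 → o x z t = 1 → o x y t = 1)

/-!
Extend three pairwise distinct germs at `x` to geodesic rays. Those rays form a tripod
centred at `x`, so any cyclic orientation takes on the germs the value of its induced
boundary order on the rays' endpoints; the extensions do not depend on the orientation, so
two orientations inducing the same boundary order agree. On degenerate triples of germs
every cyclic orientation vanishes.
-/

section GermEq

variable {X : Type*} [MetricSpace X] {x : X} {r r' r'' ρ ρ' : ℝ → X}

theorem GermEq.symm (h : GermEq x r r') : GermEq x r' r := by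
  obtain ⟨ε, hε, h⟩ := h
  exact ⟨ε, hε, fun s hs => (h s hs).symm⟩

theorem GermEq.trans (h : GermEq x r r') (h' : GermEq x r' r'') : GermEq x r r'' := by
  obtain ⟨ε, hε, h⟩ := h
  obtain ⟨ε', hε', h'⟩ := h'
  refine ⟨min ε ε', lt_min hε hε', fun s ⟨hs₀, hs⟩ => ?_⟩
  rw [h s ⟨hs₀, hs.trans (min_le_left _ _)⟩, h' s ⟨hs₀, hs.trans (min_le_right _ _)⟩]

theorem not_germEq_of_germEq (hρ : GermEq x ρ r) (hρ' : GermEq x ρ' r')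
    (h : ¬ GermEq x r r') : ¬ GermEq x ρ ρ' :=
  fun h' => h ((hρ.symm.trans h').trans hρ')

end GermEq

theorem SimplicialTreeSpace.exists_geodesicRay_germEq (T : SimplicialTreeSpace) {x : T.space}
    {r : ℝ → T.space} (hr : IsRayFrom x r) :
    ∃ ρ : {ρ : ℝ → T.space // IsGeodesicRay ρ}, ρ.1 0 = x ∧ GermEq x ρ.1 r := by
  obtain ⟨ρ, hρ, hρ₀, hg⟩ := T.germ_extends x r hr
  exact ⟨⟨ρ, hρ⟩, hρ₀, hg⟩

theorem IsInducedBoundaryOrder.ord_eq_of_extensions {T : SimplicialTreeSpace}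
    {ord : T.space → (ℝ → T.space) → (ℝ → T.space) → (ℝ → T.space) → ℤ}
    {o : T.Boundary → T.Boundary → T.Boundary → ℤ}
    (ho : IsInducedBoundaryOrder T ord o) (h : IsCyclicOrientation T ord)
    {x : T.space} {r₁ r₂ r₃ : ℝ → T.space}
    (h₁₂ : ¬ GermEq x r₁ r₂) (h₂₃ : ¬ GermEq x r₂ r₃) (h₁₃ : ¬ GermEq x r₁ r₃)
    {ρ₁ ρ₂ ρ₃ : {r : ℝ → T.space // IsGeodesicRay r}}
    (hρ₁ : ρ₁.1 0 = x) (hρ₂ : ρ₂.1 0 = x) (hρ₃ : ρ₃.1 0 = x)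
    (hg₁ : GermEq x ρ₁.1 r₁) (hg₂ : GermEq x ρ₂.1 r₂) (hg₃ : GermEq x ρ₃.1 r₃) :
    ord x r₁ r₂ r₃ = o (T.atInfinity ρ₁) (T.atInfinity ρ₂) (T.atInfinity ρ₃) := by
  rw [ho.eq_ord x ρ₁ ρ₂ ρ₃ hρ₁ hρ₂ hρ₃ (not_germEq_of_germEq hg₁ hg₂ h₁₂)
    (not_germEq_of_germEq hg₂ hg₃ h₂₃) (not_germEq_of_germEq hg₁ hg₃ h₁₃)]
  exact h.germ_invariant x _ _ _ _ _ _ hg₁.symm hg₂.symm hg₃.symm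

/-- the map sending a cyclic orientation of the simplicial tree `T`
(all valences finite and `≥ 3`) to the induced total cyclic order on `∂∞T` is
injective: if two cyclic orientations induce the same order on the boundary, they
agree (on germs of rays at every point). -/
theorem induced_boundary_order_injective
    (T : SimplicialTreeSpace)
    (ord₁ ord₂ : T.space → (ℝ → T.space) → (ℝ → T.space) → (ℝ → T.space) → ℤ)
    (h₁ : IsCyclicOrientation T ord₁) (h₂ : IsCyclicOrientation T ord₂)
    (o : T.Boundary → T.Boundary → T.Boundary → ℤ)
    (ho₁ : IsInducedBoundaryOrder T ord₁ o)
    (ho₂ : IsInducedBoundaryOrder T ord₂ o) :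
    ∀ (x : T.space) (r₁ r₂ r₃ : ℝ → T.space), IsRayFrom x r₁ → IsRayFrom x r₂ →
      IsRayFrom x r₃ → ord₁ x r₁ r₂ r₃ = ord₂ x r₁ r₂ r₃ := by
  intro x r₁ r₂ r₃ hr₁ hr₂ hr₃
  by_cases hdeg : GermEq x r₁ r₂ ∨ GermEq x r₂ r₃ ∨ GermEq x r₁ r₃
  · rw [(h₁.zero_iff x r₁ r₂ r₃ hr₁ hr₂ hr₃).2 hdeg,
      (h₂.zero_iff x r₁ r₂ r₃ hr₁ hr₂ hr₃).2 hdeg]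
  push Not at hdeg
  obtain ⟨h₁₂, h₂₃, h₁₃⟩ := hdeg
  obtain ⟨ρ₁, hρ₁, hg₁⟩ := T.exists_geodesicRay_germEq hr₁
  obtain ⟨ρ₂, hρ₂, hg₂⟩ := T.exists_geodesicRay_germEq hr₂
  obtain ⟨ρ₃, hρ₃, hg₃⟩ := T.exists_geodesicRay_germEq hr₃
  rw [ho₁.ord_eq_of_extensions h₁ h₁₂ h₂₃ h₁₃ hρ₁ hρ₂ hρ₃ hg₁ hg₂ hg₃,
    ho₂.ord_eq_of_extensions h₂ h₁₂ h₂₃ h₁₃ hρ₁ hρ₂ hρ₃ hg₁ hg₂ hg₃]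
end
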